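/- Bias dominated by variance when at least one vector is unclipped: with the notation above, if |S∖S_c| ≥ 1 then ‖x̄ − ȳ‖² ≤ (|S_c|/|S∖S_c|)·(1/m)·Σᵢ‖xᵢ − x̄‖². -/

import Mathlib

/-!
Let `u i = ‖x i - x̄‖`, let `S` be the clipped and `T` the unclipped indices. Clipping is the
projection onto the ball of radius `C`, which contains every `x k` with `k ∈ T`, so for `i ∈ S`
we get `‖x i - clip C (x i)‖ ≤ ‖x i - x k‖ ≤ u i + u k`; averaging over `k ∈ T` bounds the bias by
`∑_{i ∈ S} u i + (|S| / |T|) ∑_{k ∈ T} u k`. Cauchy–Schwarz with weights `1` on `S` and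
`|S| / |T|` on `T`, whose squares sum to `|S| m / |T|`, finishes the proof.
-/

open scoped Classical

noncomputable def clip {d : ℕ} (C : ℝ) (x : EuclideanSpace ℝ (Fin d)) :
    EuclideanSpace ℝ (Fin d) :=
  (min 1 (C / ‖x‖)) • x

open Finset

section Clip

variable {d : ℕ} {C : ℝ}

theorem clip_of_norm_le {x : EuclideanSpace ℝ (Fin d)} (h : ‖x‖ ≤ C) : clip C x = x := by
  rcases eq_or_ne x 0 with rfl | hx
  · simp [clip]
  · rw [clip, min_eq_left ((one_le_div (norm_pos_iff.mpr hx)).mpr h), one_smul]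

theorem norm_sub_clip_of_lt {x : EuclideanSpace ℝ (Fin d)} (hC : 0 ≤ C) (h : C < ‖x‖) :
    ‖x - clip C x‖ = ‖x‖ - C := by
  have hx : 0 < ‖x‖ := hC.trans_lt h
  have hle : C / ‖x‖ ≤ 1 := (div_le_one hx).mpr h.le
  rw [clip, min_eq_right hle, show x - (C / ‖x‖) • x = (1 - C / ‖x‖) • x by
      rw [sub_smul, one_smul],
    norm_smul, Real.norm_of_nonneg (sub_nonneg.mpr hle), sub_mul, one_mul,
    div_mul_cancel₀ _ hx.ne']

theorem norm_sub_clip_le {x y : EuclideanSpace ℝ (Fin d)} (hy : ‖y‖ ≤ C) :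
    ‖x - clip C x‖ ≤ ‖x - y‖ := by
  by_cases hx : ‖x‖ ≤ C
  · simp [clip_of_norm_le hx]
  · rw [norm_sub_clip_of_lt ((norm_nonneg y).trans hy) (not_le.mp hx)]
    linarith [norm_sub_norm_le x y]

theorem norm_sub_clip_le_add_average {ι : Type*} {T : Finset ι} (hT : T.Nonempty)
    {v : ι → EuclideanSpace ℝ (Fin d)} (hv : ∀ k ∈ T, ‖v k‖ ≤ C)
    (x z : EuclideanSpace ℝ (Fin d)) :
    ‖x - clip C x‖ ≤ ‖x - z‖ + (#T : ℝ)⁻¹ * ∑ k ∈ T, ‖v k - z‖ := by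
  have hcard : (0 : ℝ) < #T := by exact_mod_cast hT.card_pos
  have hsum : ∑ _k ∈ T, ‖x - clip C x‖ ≤ ∑ k ∈ T, (‖x - z‖ + ‖v k - z‖) :=
    sum_le_sum fun k hk => (norm_sub_clip_le (hv k hk)).trans <| by
      simpa only [dist_eq_norm] using dist_triangle_right x (v k) z
  rw [sum_const, sum_add_distrib, sum_const, nsmul_eq_mul, nsmul_eq_mul] at hsum
  rw [← sub_le_iff_le_add', le_inv_mul_iff₀ hcard]
  linarith

theorem norm_sum_sub_clip_le {ι : Type*} [Fintype ι] (x : ι → EuclideanSpace ℝ (Fin d))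
    (hunclipped : (univ.filter fun i => ¬ C < ‖x i‖).Nonempty) (z : EuclideanSpace ℝ (Fin d)) :
    ‖∑ i, (x i - clip C (x i))‖ ≤ ∑ i ∈ univ.filter (fun i => C < ‖x i‖), ‖x i - z‖
      + (#(univ.filter fun i => C < ‖x i‖) : ℝ) / #(univ.filter fun i => ¬ C < ‖x i‖)
        * ∑ i ∈ univ.filter (fun i => ¬ C < ‖x i‖), ‖x i - z‖ := by
  set S := univ.filter fun i => C < ‖x i‖
  set T := univ.filter fun i => ¬ C < ‖x i‖
  have hT : ∑ i ∈ T, ‖x i - clip C (x i)‖ = 0 := sum_eq_zero fun i hi => by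
    rw [clip_of_norm_le (not_lt.mp (mem_filter.mp hi).2), sub_self, norm_zero]
  have hS : ∀ i ∈ S, ‖x i - clip C (x i)‖ ≤ ‖x i - z‖ + (#T : ℝ)⁻¹ * ∑ k ∈ T, ‖x k - z‖ :=
    fun i _ => norm_sub_clip_le_add_average hunclipped
      (fun k hk => not_lt.mp (mem_filter.mp hk).2) (x i) z
  calc ‖∑ i, (x i - clip C (x i))‖ ≤ ∑ i, ‖x i - clip C (x i)‖ := norm_sum_le _ _
    _ = ∑ i ∈ S, ‖x i - clip C (x i)‖ := by
      rw [← sum_filter_add_sum_filter_not univ (fun i => C < ‖x i‖), hT, add_zero]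
    _ ≤ ∑ i ∈ S, (‖x i - z‖ + (#T : ℝ)⁻¹ * ∑ k ∈ T, ‖x k - z‖) := sum_le_sum hS
    _ = _ := by rw [sum_add_distrib, sum_const, nsmul_eq_mul, div_eq_mul_inv, mul_assoc]

end Clip

theorem sq_sum_filter_add_ratio_mul_sum_le {ι : Type*} [Fintype ι] (p : ι → Prop)
    [DecidablePred p] (hp : (univ.filter fun i => ¬ p i).Nonempty) (u : ι → ℝ) :
    (∑ i ∈ univ.filter p, u i
      + (#(univ.filter p) : ℝ) / #(univ.filter fun i => ¬ p i)
        * ∑ i ∈ univ.filter (fun i => ¬ p i), u i) ^ 2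
      ≤ #(univ.filter p) * Fintype.card ι / #(univ.filter fun i => ¬ p i) * ∑ i, u i ^ 2 := by
  set a : ℝ := ((#(univ.filter p) : ℕ) : ℝ)
  set b : ℝ := ((#(univ.filter fun i => ¬ p i) : ℕ) : ℝ)
  have hb : b ≠ 0 := Nat.cast_ne_zero.mpr (card_pos.mpr hp).ne'
  have hab : a + b = Fintype.card ι := by
    simp only [a, b]
    exact_mod_cast card_filter_add_card_filter_not p
  set w : ι → ℝ := fun i => if p i then 1 else a / b
  have hwu : ∑ i, w i * u i
      = ∑ i ∈ univ.filter p, u i + a / b * ∑ i ∈ univ.filter (fun i => ¬ p i), u i := by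
    simp only [w, ite_mul, one_mul, sum_ite, mul_sum]
  have hw : ∑ i, w i ^ 2 = a * Fintype.card ι / b := by
    simp only [w, ite_pow, one_pow, sum_ite, sum_const, nsmul_eq_mul, mul_one]
    rw [← hab]
    field_simp
    ring
  rw [← hwu, ← hw]
  exact sum_mul_sq_le_sq_mul_sq _ _ _

theorem bias_dominated_by_variance_general {d m : ℕ} (C : ℝ)
    (x : Fin m → EuclideanSpace ℝ (Fin d))
    (hunclipped : 1 ≤ (Finset.univ.filter (fun i => ¬ ‖x i‖ > C)).card) :
    ‖(m : ℝ)⁻¹ • ∑ j, x j - (m : ℝ)⁻¹ • ∑ j, clip C (x j)‖ ^ 2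
      ≤ (((Finset.univ.filter (fun i => ‖x i‖ > C)).card : ℝ)
            / ((Finset.univ.filter (fun i => ¬ ‖x i‖ > C)).card : ℝ))
          * ((1 / (m : ℝ)) * ∑ i, ‖x i - (m : ℝ)⁻¹ • ∑ j, x j‖ ^ 2) := by
  have hT : (univ.filter fun i => ¬ C < ‖x i‖).Nonempty := card_pos.mp hunclipped
  have hm : (m : ℝ) ≠ 0 := Nat.cast_ne_zero.mpr (Fin.pos hT.choose).ne'
  have hbias := (pow_le_pow_left₀ (norm_nonneg _)
    (norm_sum_sub_clip_le x hT ((m : ℝ)⁻¹ • ∑ j, x j)) 2).trans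
    (sq_sum_filter_add_ratio_mul_sum_le _ hT _)
  rw [Fintype.card_fin] at hbias
  rw [← smul_sub, ← sum_sub_distrib, norm_smul, mul_pow, norm_inv, Real.norm_natCast]
  set V := ∑ i, ‖x i - (m : ℝ)⁻¹ • ∑ j, x j‖ ^ 2
  calc (m : ℝ)⁻¹ ^ 2 * ‖∑ i, (x i - clip C (x i))‖ ^ 2
      ≤ (m : ℝ)⁻¹ ^ 2 * (#(univ.filter fun i => C < ‖x i‖) * m
          / #(univ.filter fun i => ¬ C < ‖x i‖) * V) := by
        gcongr
    _ = _ := by field_simp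

theorem bias_dominated_by_variance {d m : ℕ} (hm : 0 < m) (C : ℝ) (hC : 0 ≤ C)
    (x : Fin m → EuclideanSpace ℝ (Fin d))
    (hunclipped : 1 ≤ (Finset.univ.filter (fun i => ¬ ‖x i‖ > C)).card) :
    ‖(m : ℝ)⁻¹ • ∑ j, x j - (m : ℝ)⁻¹ • ∑ j, clip C (x j)‖ ^ 2
      ≤ (((Finset.univ.filter (fun i => ‖x i‖ > C)).card : ℝ)
            / ((Finset.univ.filter (fun i => ¬ ‖x i‖ > C)).card : ℝ))
          * ((1 / (m : ℝ)) * ∑ i, ‖x i - (m : ℝ)⁻¹ • ∑ j, x j‖ ^ 2) :=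
  bias_dominated_by_variance_general C x hunclipped
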